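/- Let F₀, F₁, F₂ be classes of functions ({0,1}^{s₀})^{n₀} → ℝ, ({0,1}^{s₁})^{n₁} → ℝ and ({0,1}^{s₂})^{n₂} → ℝ respectively. Let (R¹,σ¹) be a (d₁,K₁,ε₁)-weighted pseudorandom reduction from F₀ to F₁ and (R²,σ²) a (d₂,K₂,ε₂)-weighted pseudorandom reduction from F₁ to F₂. Define (R¹∘R²)(x,(i₁,i₂)) = R¹(R²(x,i₂), i₁) and (σ¹·σ²)(i₁,i₂) = σ¹(i₁)·σ²(i₂). Then (R¹∘R², σ¹·σ²) is a (d₁+d₂, K₁·K₂, ε₁ + K₁·ε₂)-weighted pseudorandom reduction from F₀ to F₂. -/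
import Mathlib


open Real Finset
open scoped Classical

noncomputable section

/-- Expectation of a real-valued function under the uniform distribution on a finite type. -/
def uniformExp {α : Type*} [Fintype α] (f : α → ℝ) : ℝ :=
  (∑ x, f x) / (Fintype.card α)

/-- A read-once branching program of length `n`, alphabet `{0,1}^s`, width `w`. -/
structure ROBP (n s w : ℕ) where
  δ : Fin n → Fin w → (Fin s → Bool) → Fin w
  start : Fin w
  accept : Finset (Fin w)

def ROBP.run {n s w : ℕ} (P : ROBP n s w) (x : Fin n → Fin s → Bool) : Fin w :=
  Fin.foldl n (fun v i => P.δ i v (x i)) P.start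

def ROBP.fn {n s w : ℕ} (P : ROBP n s w) (x : Fin n → Fin s → Bool) : ℝ :=
  if P.run x ∈ P.accept then 1 else 0

/-- The class of functions computed by ROBPs of length `n`, alphabet `{0,1}^s`, width `w`. -/
def Bclass (n s w : ℕ) : Set ((Fin n → Fin s → Bool) → ℝ) :=
  {f | ∃ P : ROBP n s w, f = P.fn}

/-- `(G, σ)` is a `W`-bounded `ε`-WPRG for the class `F`. -/
def IsWPRG {n s : ℕ} {ι : Type} [Fintype ι]
    (F : Set ((Fin n → Fin s → Bool) → ℝ))
    (G : ι → Fin n → Fin s → Bool) (σ : ι → ℝ) (W ε : ℝ) : Prop :=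
  (∀ r, |σ r| ≤ W) ∧
  ∀ f ∈ F, |uniformExp f - uniformExp (fun r => σ r * f (G r))| ≤ ε

/-- `G` is an `ε`-PRG for the class `F`. -/
def IsPRG {n s : ℕ} {ι : Type} [Fintype ι]
    (F : Set ((Fin n → Fin s → Bool) → ℝ))
    (G : ι → Fin n → Fin s → Bool) (ε : ℝ) : Prop :=
  ∀ f ∈ F, |uniformExp f - uniformExp (fun r => f (G r))| ≤ ε

/-- `(R, σ)` is a `(log₂ card ι, K, ε)`-weighted pseudorandom reduction from `F₀` to `F₁`. -/
def IsWPR {n₀ s₀ n₁ s₁ : ℕ} {ι : Type} [Fintype ι]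
    (F₀ : Set ((Fin n₀ → Fin s₀ → Bool) → ℝ))
    (F₁ : Set ((Fin n₁ → Fin s₁ → Bool) → ℝ))
    (R : (Fin n₁ → Fin s₁ → Bool) → ι → Fin n₀ → Fin s₀ → Bool)
    (σ : ι → ℝ) (K ε : ℝ) : Prop :=
  (∀ f ∈ F₀,
      |uniformExp f - uniformExp (fun i => σ i * uniformExp (fun x => f (R x i)))| ≤ ε) ∧
  (∀ i, |σ i| ≤ K) ∧
  (∀ f ∈ F₀, ∀ i, (fun x => f (R x i)) ∈ F₁)

def ROBP.Regular {n s w : ℕ} (P : ROBP n s w) : Prop :=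
  ∀ (i : Fin n) (v : Fin w),
    (Finset.univ.filter (fun ux : Fin w × (Fin s → Bool) => P.δ i ux.1 ux.2 = v)).card = 2 ^ s

def ROBP.Permutation {n s w : ℕ} (P : ROBP n s w) : Prop :=
  ∀ (i : Fin n) (x : Fin s → Bool), Function.Bijective (fun u => P.δ i u x)

/-- Regular ROBPs of length `n`, alphabet `{0,1}^s`, width `w`. -/
def Rclass (n s w : ℕ) : Set ((Fin n → Fin s → Bool) → ℝ) :=
  {f | ∃ P : ROBP n s w, P.Regular ∧ f = P.fn}

/-- Permutation ROBPs of length `n` over `{0,1}^s`, unbounded width, a single accept node. -/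
def Pclass (n s : ℕ) : Set ((Fin n → Fin s → Bool) → ℝ) :=
  {f | ∃ (w : ℕ) (P : ROBP n s w), P.Permutation ∧ P.accept.card = 1 ∧ f = P.fn}

/-- Permutation ROBPs of length `n`, alphabet `{0,1}^s`, width `w`, arbitrary accept set. -/
def PermClass (n s w : ℕ) : Set ((Fin n → Fin s → Bool) → ℝ) :=
  {f | ∃ P : ROBP n s w, P.Permutation ∧ f = P.fn}

/-- Run `P` starting from node `v` in layer `i` (only the transitions from layer `i` on are applied). -/
def ROBP.runFrom {n s w : ℕ} (P : ROBP n s w) (i : ℕ) (v : Fin w)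
    (x : Fin n → Fin s → Bool) : Fin w :=
  Fin.foldl n (fun u j => if i ≤ (j : ℕ) then P.δ j u (x j) else u) v

/-- Acceptance probability of the subprogram of `P` started at node `v` of layer `i`. -/
def ROBP.valueAt {n s w : ℕ} (P : ROBP n s w) (i : ℕ) (v : Fin w) : ℝ :=
  uniformExp (fun x : Fin n → Fin s → Bool => if P.runFrom i v x ∈ P.accept then (1 : ℝ) else 0)

/-- The weight `W(f)` of an ROBP: the sum over all edges of the differences of acceptance values. -/
def ROBP.weight {n s w : ℕ} (P : ROBP n s w) : ℝ :=
  ∑ i : Fin n, ∑ u : Fin w, ∑ x : Fin s → Bool,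
    |P.valueAt ((i : ℕ) + 1) (P.δ i u x) - P.valueAt (i : ℕ) u|

/-- `(k,ε)`-extractor. -/
def IsExtractor (N d m : ℕ)
    (Ext : (Fin N → Bool) → (Fin d → Bool) → (Fin m → Bool)) (k ε : ℝ) : Prop :=
  ∀ p : (Fin N → Bool) → ℝ,
    (∀ x, 0 ≤ p x) → (∑ x, p x) = 1 → (∀ x, p x ≤ (2 : ℝ) ^ (-k)) →
    (1 / 2) * ∑ z : Fin m → Bool,
      |(∑ x, ∑ y : Fin d → Bool, p x * (if Ext x y = z then (1 : ℝ) else 0)) / 2 ^ d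
        - 1 / 2 ^ m| ≤ ε

/-- `(α,γ)`-averaging sampler. -/
def IsAvgSampler (r p q : ℕ)
    (Samp : (Fin r → Bool) → (Fin p → Bool) → (Fin q → Bool)) (α γ : ℝ) : Prop :=
  ∀ f : (Fin q → Bool) → ℝ, (∀ z, -1 ≤ f z ∧ f z ≤ 1) →
    (∑ x : Fin r → Bool,
        if α ≤ |(∑ y : Fin p → Bool, f (Samp x y)) / 2 ^ p - uniformExp f| then (1 : ℝ) else 0)
      / 2 ^ r ≤ γ

/-- The matrix norm `‖M‖₁ = max_i Σ_j |M i j|`. -/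
def matOneNorm {w : ℕ} (M : Matrix (Fin w) (Fin w) ℝ) : ℝ :=
  ⨆ i, ∑ j, |M i j|

end

lemma uniformExp_prod {α β : Type*} [Fintype α] [Fintype β] (F : α × β → ℝ) :
    uniformExp F = uniformExp (fun a => uniformExp (fun b => F (a, b))) := by
  unfold uniformExp
  rw [Fintype.sum_prod_type, Fintype.card_prod, ← Finset.sum_div, div_div, Nat.cast_mul,
    mul_comm]

lemma abs_uniformExp_le {α : Type*} [Fintype α] [Nonempty α] (h : α → ℝ) (C : ℝ)
    (hb : ∀ a, |h a| ≤ C) : |uniformExp h| ≤ C := by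
  have hc : (0 : ℝ) < (Fintype.card α : ℝ) := by positivity
  rw [uniformExp, abs_div, abs_of_pos hc, div_le_iff₀ hc]
  calc |∑ x, h x| ≤ ∑ x, |h x| := Finset.abs_sum_le_sum_abs _ _
    _ ≤ ∑ _x : α, C := Finset.sum_le_sum fun x _ => hb x
    _ = C * (Fintype.card α : ℝ) := by simp [mul_comm]

lemma uniformExp_const_mul {α : Type*} [Fintype α] (c : ℝ) (h : α → ℝ) :
    uniformExp (fun a => c * h a) = c * uniformExp h := by
  simp [uniformExp, ← Finset.mul_sum, mul_div_assoc]

lemma uniformExp_sub {α : Type*} [Fintype α] (h₁ h₂ : α → ℝ) :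
    uniformExp h₁ - uniformExp h₂ = uniformExp (fun a => h₁ a - h₂ a) := by
  simp [uniformExp, Finset.sum_sub_distrib, sub_div]

-- STATEMENT 11
theorem stmt11 (n₀ s₀ n₁ s₁ n₂ s₂ d₁ d₂ : ℕ)
    (F₀ : Set ((Fin n₀ → Fin s₀ → Bool) → ℝ))
    (F₁ : Set ((Fin n₁ → Fin s₁ → Bool) → ℝ))
    (F₂ : Set ((Fin n₂ → Fin s₂ → Bool) → ℝ))
    (R₁ : (Fin n₁ → Fin s₁ → Bool) → (Fin d₁ → Bool) → Fin n₀ → Fin s₀ → Bool)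
    (σ₁ : (Fin d₁ → Bool) → ℝ)
    (R₂ : (Fin n₂ → Fin s₂ → Bool) → (Fin d₂ → Bool) → Fin n₁ → Fin s₁ → Bool)
    (σ₂ : (Fin d₂ → Bool) → ℝ)
    (K₁ K₂ ε₁ ε₂ : ℝ)
    (h₁ : IsWPR F₀ F₁ R₁ σ₁ K₁ ε₁)
    (h₂ : IsWPR F₁ F₂ R₂ σ₂ K₂ ε₂) :
    IsWPR (ι := (Fin d₁ → Bool) × (Fin d₂ → Bool)) F₀ F₂
      (fun x i => R₁ (R₂ x i.2) i.1)
      (fun i => σ₁ i.1 * σ₂ i.2)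
      (K₁ * K₂) (ε₁ + K₁ * ε₂) := by
  obtain ⟨h₁e, h₁b, h₁c⟩ := h₁
  obtain ⟨h₂e, h₂b, h₂c⟩ := h₂
  have hK₁ : 0 ≤ K₁ := le_trans (abs_nonneg _) (h₁b (fun _ => false))
  refine ⟨?_, ?_, ?_⟩
  · intro f hf
    set g : (Fin d₁ → Bool) → ℝ := fun i₁ => uniformExp (fun y => f (R₁ y i₁)) with hg
    set T : (Fin d₁ → Bool) → ℝ := fun i₁ =>
      uniformExp (fun i₂ => σ₂ i₂ * uniformExp (fun x => f (R₁ (R₂ x i₂) i₁))) with hT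
    have step1 : |uniformExp f - uniformExp (fun i₁ => σ₁ i₁ * g i₁)| ≤ ε₁ := h₁e f hf
    have step2 : ∀ i₁, |g i₁ - T i₁| ≤ ε₂ := fun i₁ => h₂e _ (h₁c f hf i₁)
    have hTpr : uniformExp (fun i : (Fin d₁ → Bool) × (Fin d₂ → Bool) =>
        σ₁ i.1 * σ₂ i.2 * uniformExp fun x => f (R₁ (R₂ x i.2) i.1))
        = uniformExp (fun i₁ => σ₁ i₁ * T i₁) := by
      rw [uniformExp_prod]
      congr 1; funext i₁
      rw [hT]
      rw [← uniformExp_const_mul]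
      congr 1; funext i₂; ring
    rw [hTpr]
    have key : |uniformExp (fun i₁ => σ₁ i₁ * g i₁) - uniformExp (fun i₁ => σ₁ i₁ * T i₁)|
        ≤ K₁ * ε₂ := by
      rw [uniformExp_sub]
      refine abs_uniformExp_le _ _ (fun i₁ => ?_)
      have : σ₁ i₁ * g i₁ - σ₁ i₁ * T i₁ = σ₁ i₁ * (g i₁ - T i₁) := by ring
      rw [this, abs_mul]
      exact mul_le_mul (h₁b i₁) (step2 i₁) (abs_nonneg _) hK₁
    calc |uniformExp f - uniformExp (fun i₁ => σ₁ i₁ * T i₁)|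
        ≤ |uniformExp f - uniformExp (fun i₁ => σ₁ i₁ * g i₁)|
          + |uniformExp (fun i₁ => σ₁ i₁ * g i₁) - uniformExp (fun i₁ => σ₁ i₁ * T i₁)| :=
          abs_sub_le _ _ _
      _ ≤ ε₁ + K₁ * ε₂ := add_le_add step1 key
  · intro i
    rw [abs_mul]
    exact mul_le_mul (h₁b i.1) (h₂b i.2) (abs_nonneg _) hK₁
  · intro f hf i
    exact h₂c _ (h₁c f hf i.1) i.2
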